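/- Let n ≥ 1, let θ₀ ≠ θ₁ be real numbers, and let x = (x₁, …, xₙ) ∈ ℝⁿ be such that σ̂ⱼ² := (1/n) ∑_{i=1}^{n} (xᵢ − θⱼ)² > 0 for j = 0, 1. Set L̂ⱼ = (2π σ̂ⱼ²)^{-n/2} exp(−n/2), and for any fixed v > 0 set Lⱼ(v) = ∏_{i=1}^{n} (2πv)^{-1/2} exp(−(xᵢ − θⱼ)²/(2v)). Then L̂₁ ≥ L̂₀ if and only if L₁(v) ≥ L₀(v). Hence the proposed test for unknown variance is equivalent to the optimum test for known variance: one gets the same test minimizing the sum of the two error probabilities irrespective of whether σ² is known or unknown. -/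

import Mathlib

/-!
Both tests compare the residual sums of squares `∑ (xᵢ - θⱼ)²`: for fixed `v` the likelihood
depends on `θ` only through the factor `exp (-∑ (xᵢ - θ)² / (2v))`, and the maximized likelihood
is a decreasing function of `σ̂² = ∑ (xᵢ - θ)² / n`.
-/

open Real Finset

noncomputable def gaussianLikelihood {ι : Type*} [Fintype ι] (x : ι → ℝ) (θ v : ℝ) : ℝ :=
  ∏ i, (2 * π * v) ^ (-(1/2) : ℝ) * exp (-(x i - θ)^2 / (2*v))

/-- `L̂ = (2π σ̂²)^(-n/2) e^(-n/2)` as a function of the sample size `n` and of `s = σ̂²`. -/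
noncomputable def profileLikelihood (n s : ℝ) : ℝ :=
  (2 * π * s) ^ (-n/2) * exp (-n/2)

theorem gaussianLikelihood_eq {ι : Type*} [Fintype ι] (x : ι → ℝ) (θ : ℝ) {v : ℝ} (hv : 0 < v) :
    gaussianLikelihood x θ v =
      (2 * π * v) ^ (-(Fintype.card ι : ℝ)/2) * exp (-(∑ i, (x i - θ)^2) / (2*v)) := by
  rw [gaussianLikelihood, prod_mul_distrib, prod_const, ← exp_sum, ← sum_neg_distrib, sum_div,
    card_univ, ← rpow_natCast, ← rpow_mul (by positivity)]
  congr 2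
  ring

theorem gaussianLikelihood_le_iff {ι : Type*} [Fintype ι] (x : ι → ℝ) (θ₀ θ₁ : ℝ) {v : ℝ}
    (hv : 0 < v) :
    gaussianLikelihood x θ₀ v ≤ gaussianLikelihood x θ₁ v ↔
      ∑ i, (x i - θ₁)^2 ≤ ∑ i, (x i - θ₀)^2 := by
  rw [gaussianLikelihood_eq x θ₀ hv, gaussianLikelihood_eq x θ₁ hv,
    mul_le_mul_iff_right₀ (by positivity), exp_le_exp,
    div_le_div_iff_of_pos_right (by positivity), neg_le_neg_iff]

theorem profileLikelihood_le_iff {n s₀ s₁ : ℝ} (hn : 0 < n) (hs₀ : 0 < s₀) (hs₁ : 0 < s₁) :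
    profileLikelihood n s₀ ≤ profileLikelihood n s₁ ↔ s₁ ≤ s₀ := by
  rw [profileLikelihood, profileLikelihood, mul_le_mul_iff_left₀ (exp_pos _),
    rpow_le_rpow_iff_of_neg (by positivity) (by positivity) (by linarith),
    mul_le_mul_iff_right₀ (by positivity)]

theorem proposed_test_equivalent_to_optimum_test_general
    (n : ℕ) (hn : 1 ≤ n) (θ₀ θ₁ : ℝ) (x : Fin n → ℝ)
    (s₀ s₁ : ℝ)
    (hs₀ : s₀ = (∑ i, (x i - θ₀)^2) / n) (hs₁ : s₁ = (∑ i, (x i - θ₁)^2) / n)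
    (hs₀_pos : 0 < s₀) (hs₁_pos : 0 < s₁)
    (Lhat₀ Lhat₁ : ℝ)
    (hLhat₀ : Lhat₀ = (2 * π * s₀) ^ (-(n : ℝ)/2) * exp (-(n : ℝ)/2))
    (hLhat₁ : Lhat₁ = (2 * π * s₁) ^ (-(n : ℝ)/2) * exp (-(n : ℝ)/2))
    (v : ℝ) (hv : 0 < v) (L₀ L₁ : ℝ)
    (hL₀ : L₀ = ∏ i, (2 * π * v) ^ (-(1/2) : ℝ) * exp (-(x i - θ₀)^2 / (2*v)))
    (hL₁ : L₁ = ∏ i, (2 * π * v) ^ (-(1/2) : ℝ) * exp (-(x i - θ₁)^2 / (2*v))) :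
    Lhat₀ ≤ Lhat₁ ↔ L₀ ≤ L₁ := by
  have hn_pos : (0 : ℝ) < n := by exact_mod_cast hn
  change Lhat₀ = profileLikelihood n s₀ at hLhat₀
  change Lhat₁ = profileLikelihood n s₁ at hLhat₁
  change L₀ = gaussianLikelihood x θ₀ v at hL₀
  change L₁ = gaussianLikelihood x θ₁ v at hL₁
  rw [hLhat₀, hLhat₁, hL₀, hL₁, profileLikelihood_le_iff hn_pos hs₀_pos hs₁_pos,
    gaussianLikelihood_le_iff x θ₀ θ₁ hv, hs₀, hs₁, div_le_div_iff_of_pos_right hn_pos]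

/-- The proposed test for the mean of a normal population with unknown
variance (based on maximized likelihoods `L̂₁ ≥ L̂₀`) is equivalent to the optimum
test for known variance (`L₁(v) ≥ L₀(v)` for any fixed `v > 0`): one gets the same
test minimizing the sum of the two error probabilities irrespective of whether the
variance is known or unknown. -/
theorem proposed_test_equivalent_to_optimum_test
    (n : ℕ) (hn : 1 ≤ n) (θ₀ θ₁ : ℝ) (hθ : θ₀ ≠ θ₁) (x : Fin n → ℝ)
    (s₀ s₁ : ℝ)
    (hs₀ : s₀ = (∑ i, (x i - θ₀)^2) / n) (hs₁ : s₁ = (∑ i, (x i - θ₁)^2) / n)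
    (hs₀_pos : 0 < s₀) (hs₁_pos : 0 < s₁)
    (Lhat₀ Lhat₁ : ℝ)
    (hLhat₀ : Lhat₀ = (2 * π * s₀) ^ (-(n : ℝ)/2) * exp (-(n : ℝ)/2))
    (hLhat₁ : Lhat₁ = (2 * π * s₁) ^ (-(n : ℝ)/2) * exp (-(n : ℝ)/2))
    (v : ℝ) (hv : 0 < v) (L₀ L₁ : ℝ)
    (hL₀ : L₀ = ∏ i, (2 * π * v) ^ (-(1/2) : ℝ) * exp (-(x i - θ₀)^2 / (2*v)))
    (hL₁ : L₁ = ∏ i, (2 * π * v) ^ (-(1/2) : ℝ) * exp (-(x i - θ₁)^2 / (2*v))) :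
    Lhat₀ ≤ Lhat₁ ↔ L₀ ≤ L₁ :=
  proposed_test_equivalent_to_optimum_test_general n hn θ₀ θ₁ x s₀ s₁ hs₀ hs₁ hs₀_pos hs₁_pos Lhat₀
    Lhat₁ hLhat₀ hLhat₁ v hv L₀ L₁ hL₀ hL₁
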